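/- arXiv:2604.15716 — 6 statements merged into one kernel-verified Lean document; each statement's English description precedes it below -/
import Mathlib

section
/- Let B > 1, Φ > 0, and x ∈ (−1, 1). Set X⁺ = Φ(1+x) + (1−x) and X⁻ = Φ(1+x) − (1−x), and suppose X⁻ ≠ 0; let χ = X⁺/X⁻. Then for every y ∈ ℝ, the balance relation Φ(B+y)(1+x)(1−y) = (B−y)(1−x)(1+y) holds if and only if y² + (B−1)χ·y − B = 0. -/
/-- With X⁺ = Φ(1+x) + (1−x), X⁻ = Φ(1+x) − (1−x) ≠ 0 and
χ = X⁺/X⁻, the balance relation Φ(B+y)(1+x)(1−y) = (B−y)(1−x)(1+y) is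
equivalent to the quadratic y² + (B−1)χy − B = 0. -/
theorem balance_iff_quadratic (B Φ x : ℝ) (hB : 1 < B) (hΦ : 0 < Φ)
    (hx : x ∈ Set.Ioo (-1 : ℝ) 1)
    (Xp Xm χ : ℝ)
    (hXp : Xp = Φ * (1 + x) + (1 - x))
    (hXm : Xm = Φ * (1 + x) - (1 - x))
    (hXm0 : Xm ≠ 0)
    (hχ : χ = Xp / Xm) :
    ∀ y : ℝ,
      (Φ * (B + y) * (1 + x) * (1 - y) = (B - y) * (1 - x) * (1 + y) ↔
        y ^ 2 + (B - 1) * χ * y - B = 0) := by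
  intro y
  subst hχ
  constructor
  · intro h
    field_simp
    rw [hXp, hXm]
    linear_combination -h
  · intro h
    field_simp at h
    rw [hXp, hXm] at h
    linear_combination -h
end

section
/- Let B > 1, φ ∈ (−1, 1), and x ∈ (−1, 1) with x ≠ −φ, and set Φ = (1+φ)/(1−φ). Define g(x) = (1/(2(φ+x)))·(−(B−1)(1+φx) + √((B−1)²(1+φx)² + 4B(φ+x)²)). Then g(x) ∈ (−1, 1) and g(x) satisfies the balance relation Φ(B + g(x))(1+x)(1−g(x)) = (B − g(x))(1−x)(1+g(x)). Hence g(x) is the unique downstream steady state in (−1,1) corresponding to the upstream state x. -/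
set_option maxHeartbeats 1000000


/-- For B > 1, φ ∈ (−1,1), x ∈ (−1,1) with x ≠ −φ, and
g(x) = (1/(2(φ+x)))(−(B−1)(1+φx) + √((B−1)²(1+φx)² + 4B(φ+x)²)),
g(x) lies in (−1,1), satisfies the balance relation, and is the unique
downstream steady state in (−1,1). -/
theorem iteration_map_unique_steady_state (B φ x : ℝ) (hB : 1 < B)
    (hφ : φ ∈ Set.Ioo (-1 : ℝ) 1) (hx : x ∈ Set.Ioo (-1 : ℝ) 1) (hxφ : x ≠ -φ)
    (Φ : ℝ) (hΦ : Φ = (1 + φ) / (1 - φ))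
    (g : ℝ → ℝ)
    (hg : ∀ z : ℝ, g z = (1 / (2 * (φ + z))) *
      (-(B - 1) * (1 + φ * z) +
        Real.sqrt ((B - 1) ^ 2 * (1 + φ * z) ^ 2 + 4 * B * (φ + z) ^ 2))) :
    g x ∈ Set.Ioo (-1 : ℝ) 1 ∧
    Φ * (B + g x) * (1 + x) * (1 - g x) = (B - g x) * (1 - x) * (1 + g x) ∧
    (∀ y ∈ Set.Ioo (-1 : ℝ) 1,
      Φ * (B + y) * (1 + x) * (1 - y) = (B - y) * (1 - x) * (1 + y) → y = g x) := by
  obtain ⟨hφ1, hφ2⟩ := hφ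
  obtain ⟨hx1, hx2⟩ := hx
  have ha : φ + x ≠ 0 := by
    intro h; apply hxφ; linarith
  have ha2 : 0 < (φ + x) ^ 2 := by positivity
  have hp : 0 < 1 + φ * x := by nlinarith
  have hcp : 0 < (B - 1) * (1 + φ * x) := by nlinarith
  have hD : 0 ≤ (B - 1) ^ 2 * (1 + φ * x) ^ 2 + 4 * B * (φ + x) ^ 2 := by nlinarith
  set s := Real.sqrt ((B - 1) ^ 2 * (1 + φ * x) ^ 2 + 4 * B * (φ + x) ^ 2) with hs_def
  have hs2 : s ^ 2 = (B - 1) ^ 2 * (1 + φ * x) ^ 2 + 4 * B * (φ + x) ^ 2 :=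
    Real.sq_sqrt hD
  have hs0 : 0 ≤ s := Real.sqrt_nonneg _
  have hscp : (B - 1) * (1 + φ * x) < s := by nlinarith
  have hgx : g x = (s - (B - 1) * (1 + φ * x)) / (2 * (φ + x)) := by
    rw [hg x, ← hs_def]; ring
  have hq : (φ + x) * (g x) ^ 2 + (B - 1) * (1 + φ * x) * g x - B * (φ + x) = 0 := by
    rw [hgx]
    field_simp
    nlinarith [hs2]
  have hmem : g x ∈ Set.Ioo (-1 : ℝ) 1 := by
    rcases lt_or_gt_of_ne ha with hneg | hpos
    · -- φ + x < 0 : g x < 0, and g x > -1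
      have hga : g x < 0 := by
        rw [hgx]
        apply div_neg_of_pos_of_neg <;> linarith
      have hgb : -1 < g x := by
        rw [hgx]
        rw [lt_div_iff_of_neg (by linarith : 2 * (φ + x) < 0)]
        have : s < (B - 1) * (1 + φ * x) - 2 * (φ + x) := by
          nlinarith [hs2, mul_pos (mul_pos (sub_pos.mpr hB) (by linarith : (0:ℝ) < 1 + φ)) (by linarith : (0:ℝ) < 1 + x)]
        linarith
      exact ⟨hgb, by linarith⟩
    · have hga : 0 < g x := by
        rw [hgx]; apply div_pos <;> linarith
      have hgb : g x < 1 := by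
        rw [hgx, div_lt_one (by linarith : (0:ℝ) < 2 * (φ + x))]
        have : s < (B - 1) * (1 + φ * x) + 2 * (φ + x) := by
          nlinarith [hs2, mul_pos (mul_pos (sub_pos.mpr hB) (by linarith : (0:ℝ) < 1 - φ)) (by linarith : (0:ℝ) < 1 - x)]
        linarith
      exact ⟨by linarith, hgb⟩
  have h1φ : (1 : ℝ) - φ ≠ 0 := by linarith
  refine ⟨hmem, ?_, ?_⟩
  · rw [hΦ]
    field_simp
    linear_combination (-2 : ℝ) * hq
  · rintro y ⟨hy1, hy2⟩ hbal
    rw [hΦ] at hbal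
    rw [div_mul_eq_mul_div, div_mul_eq_mul_div, div_mul_eq_mul_div,
      div_eq_iff h1φ] at hbal
    have hqy : (φ + x) * y ^ 2 + (B - 1) * (1 + φ * x) * y - B * (φ + x) = 0 := by
      linear_combination (-(1:ℝ)/2) * hbal
    by_contra hne
    have hfac : (y - g x) * ((φ + x) * (y + g x) + (B - 1) * (1 + φ * x)) = 0 := by
      linear_combination hqy - hq
    have h2 : (φ + x) * (y + g x) + (B - 1) * (1 + φ * x) = 0 := by
      rcases mul_eq_zero.mp hfac with h | h
      · exact absurd (by linarith : y = g x) hne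
      · exact h
    have h3 : (φ + x) * (g x * y + B) = 0 := by
      linear_combination y * h2 - hqy
    have h4 : g x * y + B = 0 := by
      rcases mul_eq_zero.mp h3 with h | h
      · exact absurd h ha
      · exact h
    obtain ⟨hg1, hg2⟩ := hmem
    nlinarith [mul_pos (by linarith : (0:ℝ) < 1 + g x) (by linarith : (0:ℝ) < 1 + y),
      mul_pos (by linarith : (0:ℝ) < 1 - g x) (by linarith : (0:ℝ) < 1 - y)]
end

section
/- Let B > 1 and φ ∈ ℝ with |φ| < 1/B, set Φ = (1+φ)/(1−φ) and ξ = −φB ∈ (−1,1). Suppose x, y ∈ (−1, 1) satisfy the balance relation Φ(B+y)(1+x)(1−y) = (B−y)(1−x)(1+y). Then: if x ∈ (ξ, 1) then y > x, and if x ∈ (−1, ξ) then y < x. In particular the stationary distribution is strictly increasing along the pathway when the input exceeds ξ and strictly decreasing when it lies below ξ. -/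
/-- For B > 1, |φ| < 1/B, Φ = (1+φ)/(1−φ) and ξ = −φB, if
x, y ∈ (−1,1) satisfy the balance relation Φ(B+y)(1+x)(1−y) = (B−y)(1−x)(1+y),
then y > x when x ∈ (ξ,1) and y < x when x ∈ (−1,ξ). -/
theorem balance_monotone_step (B φ : ℝ) (hB : 1 < B) (hφ : |φ| < 1 / B)
    (Φ ξ : ℝ) (hΦ : Φ = (1 + φ) / (1 - φ)) (hξ : ξ = -φ * B)
    (x y : ℝ) (hx : x ∈ Set.Ioo (-1 : ℝ) 1) (hy : y ∈ Set.Ioo (-1 : ℝ) 1)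
    (hbal : Φ * (B + y) * (1 + x) * (1 - y) = (B - y) * (1 - x) * (1 + y)) :
    (x ∈ Set.Ioo ξ 1 → x < y) ∧ (x ∈ Set.Ioo (-1 : ℝ) ξ → y < x) := by
  obtain ⟨hx1, hx2⟩ := hx
  obtain ⟨hy1, hy2⟩ := hy
  have hB0 : (0:ℝ) < B := lt_trans one_pos hB
  have hφB : |φ| * B < 1 := by
    have h := (lt_div_iff₀ hB0).mp hφ
    linarith
  have hφ1 : |φ| < 1 := by
    nlinarith [abs_nonneg φ]
  have hφlt : φ < 1 := lt_of_le_of_lt (le_abs_self φ) hφ1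
  have hφgt : -1 < φ := neg_lt_of_abs_lt hφ1
  have h1φ : (0:ℝ) < 1 - φ := by linarith
  -- clear the denominator in Φ
  have H : (1 + φ) * ((B + y) * (1 + x) * (1 - y)) =
      (1 - φ) * ((B - y) * (1 - x) * (1 + y)) := by
    have h := hbal
    rw [hΦ, div_mul_eq_mul_div, div_mul_eq_mul_div, div_mul_eq_mul_div,
      div_eq_iff (ne_of_gt h1φ)] at h
    linarith [h]
  -- key reduced balance relation
  have key : (x + φ) * (B - y ^ 2) = (B - 1) * y * (1 + φ * x) := by
    linear_combination H / 2
  clear hbal hΦ H hφ hφB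
  -- 1 + φ x > 0
  have hpx : 0 < 1 + φ * x := by nlinarith
  have hBy2 : 0 < B - y ^ 2 := by nlinarith
  have hBxy : 0 < B + x * y := by nlinarith
  have hB1 : (0:ℝ) < B - 1 := by linarith
  -- r > 0 where r = (x+φ)(x+y) + (B−1)(1+φx)
  have hry : ((x + φ) * (x + y) + (B - 1) * (1 + φ * x)) * y
      = (x + φ) * (B + x * y) := by
    linear_combination -key
  have hrpos : 0 < (x + φ) * (x + y) + (B - 1) * (1 + φ * x) := by
    rcases lt_trichotomy (x + φ) 0 with hc | hc | hc
    · have h1 : (x + φ) * (B - y ^ 2) < 0 := mul_neg_of_neg_of_pos hc hBy2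
      have hyneg : y < 0 := by
        by_contra h
        push_neg at h
        have h5 : 0 ≤ (B - 1) * y * (1 + φ * x) :=
          mul_nonneg (mul_nonneg hB1.le h) hpx.le
        linarith [key, h1]
      have h2 : ((x + φ) * (x + y) + (B - 1) * (1 + φ * x)) * y < 0 := by
        rw [hry]; exact mul_neg_of_neg_of_pos hc hBxy
      by_contra h
      push_neg at h
      have h6 : 0 ≤ -((x + φ) * (x + y) + (B - 1) * (1 + φ * x)) * (-y) :=
        mul_nonneg (by linarith) (by linarith)
      have h7 : -((x + φ) * (x + y) + (B - 1) * (1 + φ * x)) * (-y)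
          = ((x + φ) * (x + y) + (B - 1) * (1 + φ * x)) * y := by ring
      linarith [h7 ▸ h6]
    · have hy0 : y = 0 := by
        have h0 : (B - 1) * y * (1 + φ * x) = 0 := by rw [← key, hc]; ring
        rcases mul_eq_zero.mp h0 with h' | h'
        · rcases mul_eq_zero.mp h' with h'' | h''
          · linarith
          · exact h''
        · linarith
      rw [hc, hy0]
      simp only [zero_mul, zero_add]
      exact mul_pos hB1 hpx
    · have h2 : 0 < ((x + φ) * (x + y) + (B - 1) * (1 + φ * x)) * y := by
        rw [hry]; exact mul_pos hc hBxy
      have h1 : 0 < (x + φ) * (B - y ^ 2) := mul_pos hc hBy2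
      have hypos : 0 < y := by
        by_contra h
        push_neg at h
        have h4 : (0:ℝ) ≤ (B - 1) * (1 + φ * x) := mul_nonneg hB1.le hpx.le
        have h5 : 0 ≤ (B - 1) * (1 + φ * x) * (-y) := mul_nonneg h4 (by linarith)
        have h6 : (B - 1) * (1 + φ * x) * (-y) = -((B - 1) * y * (1 + φ * x)) := by
          ring
        linarith [key, h6 ▸ h5]
      by_contra h
      push_neg at h
      have h6 : 0 ≤ -((x + φ) * (x + y) + (B - 1) * (1 + φ * x)) * y :=
        mul_nonneg (by linarith) hypos.le
      have h7 : -((x + φ) * (x + y) + (B - 1) * (1 + φ * x)) * y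
          = -(((x + φ) * (x + y) + (B - 1) * (1 + φ * x)) * y) := by ring
      linarith [h7 ▸ h6]
  -- main identity
  have main : (y - x) * ((x + φ) * (x + y) + (B - 1) * (1 + φ * x))
      = (1 - x ^ 2) * (x - ξ) := by
    rw [hξ]
    linear_combination (-1 : ℝ) * key
  have hx2pos : 0 < 1 - x ^ 2 := by nlinarith
  constructor
  · rintro ⟨h1, _⟩
    have hp : 0 < (1 - x ^ 2) * (x - ξ) := mul_pos hx2pos (by linarith)
    by_contra h
    push_neg at h
    have h6 : 0 ≤ (x - y) * ((x + φ) * (x + y) + (B - 1) * (1 + φ * x)) :=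
      mul_nonneg (by linarith) hrpos.le
    have h7 : (x - y) * ((x + φ) * (x + y) + (B - 1) * (1 + φ * x))
        = -((y - x) * ((x + φ) * (x + y) + (B - 1) * (1 + φ * x))) := by ring
    linarith [h7 ▸ h6, main]
  · rintro ⟨_, h2⟩
    have hp : (1 - x ^ 2) * (x - ξ) < 0 :=
      mul_neg_of_pos_of_neg hx2pos (by linarith)
    by_contra h
    push_neg at h
    have h6 : 0 ≤ (y - x) * ((x + φ) * (x + y) + (B - 1) * (1 + φ * x)) :=
      mul_nonneg (by linarith) hrpos.le
    linarith [main]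
end

section
/- Let B > 1 and φ ∈ ℝ with |φ| < 1/B, set Φ = (1+φ)/(1−φ) and ξ = −φB ∈ (−1,1). Let (x_i)_{i≥0} be a sequence with x_i ∈ (−1, 1) for all i, satisfying the balance relation Φ(B+x_{i+1})(1+x_i)(1−x_{i+1}) = (B−x_{i+1})(1−x_i)(1+x_{i+1}) for every i. If x_0 ∈ (ξ, 1), then (x_i) is strictly increasing and converges to 1; if x_0 ∈ (−1, ξ), then (x_i) is strictly decreasing and converges to −1. -/
open Filter

/-!
Clearing the denominator of `Φ`, the balance relation between consecutive states `x`, `y` can be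
written in the two forms
  `(y - x) (B + φ y) = (1 - x y) (y - ξ)` and
  `(x - ξ) (B - y² + φ (1 - B) y) = (B - 1) (1 - φ y) (y - ξ)`,
in which all other factors are positive for `x, y ∈ (-1, 1)`. So `x - ξ`, `y - ξ` and `y - x` have
the same sign: a sequence starting above `ξ` stays above `ξ` and increases, and its limit `L`
satisfies `(1 - L²) (L - ξ) = 0`, which forces `L = 1`. The relation is invariant under
`(x, y, φ) ↦ (-x, -y, -φ)`, which exchanges the two cases.
-/

theorem eq_of_tendsto_of_forall_succ_eq {X Y : Type*} [TopologicalSpace X] [TopologicalSpace Y]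
    [T2Space Y] {f : X → X → Y} (hf : Continuous (Function.uncurry f)) {x : ℕ → X} {L : X}
    {c : Y} (hx : Tendsto x atTop (nhds L)) (h : ∀ n, f (x n) (x (n + 1)) = c) : f L L = c := by
  have hpair := (hf.tendsto (L, L)).comp (hx.prodMk_nhds (hx.comp (tendsto_add_atTop_nat 1)))
  simp only [Function.comp_def, Function.uncurry_apply_pair, h] at hpair
  exact tendsto_nhds_unique hpair tendsto_const_nhds

def StationaryBalance (B φ x y : ℝ) : Prop :=
  (1 + φ) * (B + y) * (1 + x) * (1 - y) = (1 - φ) * (B - y) * (1 - x) * (1 + y)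

namespace StationaryBalance

variable {B φ x y : ℝ}

theorem of_eq (hφ : φ ≠ 1)
    (h : (1 + φ) / (1 - φ) * (B + y) * (1 + x) * (1 - y) = (B - y) * (1 - x) * (1 + y)) :
    StationaryBalance B φ x y := by
  have h1φ : 1 - φ ≠ 0 := sub_ne_zero.mpr hφ.symm
  unfold StationaryBalance
  field_simp at h
  linear_combination h

theorem neg (h : StationaryBalance B φ x y) : StationaryBalance B (-φ) (-x) (-y) := by
  unfold StationaryBalance at *
  linear_combination -1 * h

theorem sub_mul_eq (h : StationaryBalance B φ x y) :
    (y - x) * (B + φ * y) = (1 - x * y) * (y + φ * B) := by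
  unfold StationaryBalance at h
  linear_combination (-1 / 2 : ℝ) * h

theorem add_mul_eq (h : StationaryBalance B φ x y) :
    (x + φ * B) * (B - y ^ 2 + φ * (1 - B) * y) = (B - 1) * (1 - φ * y) * (y + φ * B) := by
  unfold StationaryBalance at h
  linear_combination (1 / 2 : ℝ) * h

theorem lt_and_lt_of_lt (hB : 1 < B) (hφ : |φ| < 1) (hx : x ∈ Set.Ioo (-1 : ℝ) 1)
    (hy : y ∈ Set.Ioo (-1 : ℝ) 1) (h : StationaryBalance B φ x y) (hxξ : -φ * B < x) :
    x < y ∧ -φ * B < y := by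
  obtain ⟨hx₁, hx₂⟩ := hx
  obtain ⟨hy₁, hy₂⟩ := hy
  have hφy : |φ * y| < 1 := by
    rw [abs_mul]
    nlinarith [abs_nonneg φ, abs_lt.mpr (⟨hy₁, hy₂⟩ : -1 < y ∧ y < 1)]
  obtain ⟨hφy₁, hφy₂⟩ := abs_lt.mp hφy
  have hD : 0 < B - y ^ 2 + φ * (1 - B) * y := by nlinarith
  have hyξ : 0 < y + φ * B := by
    refine pos_of_mul_pos_right ?_ (by nlinarith : (0 : ℝ) ≤ (B - 1) * (1 - φ * y))
    rw [← h.add_mul_eq]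
    exact mul_pos (by linarith) hD
  have hxy : 0 < y - x := by
    refine pos_of_mul_pos_left ?_ (by linarith : (0 : ℝ) ≤ B + φ * y)
    rw [h.sub_mul_eq]
    exact mul_pos (by nlinarith) hyξ
  constructor <;> linarith

end StationaryBalance

section

variable {B φ : ℝ} {x : ℕ → ℝ}

theorem strictMono_of_stationaryBalance (hB : 1 < B) (hφ : |φ| < 1)
    (hmem : ∀ i, x i ∈ Set.Ioo (-1 : ℝ) 1) (hbal : ∀ i, StationaryBalance B φ (x i) (x (i + 1)))
    (h₀ : -φ * B < x 0) : StrictMono x := by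
  have hstep i (hi : -φ * B < x i) := (hbal i).lt_and_lt_of_lt hB hφ (hmem i) (hmem (i + 1)) hi
  have habove : ∀ i, -φ * B < x i := fun i => by
    induction i with
    | zero => exact h₀
    | succ i ih => exact (hstep i ih).2
  exact strictMono_nat_of_lt_succ fun i => (hstep i (habove i)).1

theorem tendsto_one_of_stationaryBalance (hmono : Monotone x)
    (hmem : ∀ i, x i ∈ Set.Ioo (-1 : ℝ) 1) (hbal : ∀ i, StationaryBalance B φ (x i) (x (i + 1)))
    (h₀ : -φ * B < x 0) : Tendsto x atTop (nhds 1) := by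
  have hbdd : BddAbove (Set.range x) := ⟨1, by rintro _ ⟨i, rfl⟩; exact (hmem i).2.le⟩
  set L := ⨆ i, x i
  have hL : Tendsto x atTop (nhds L) := tendsto_atTop_ciSup hmono hbdd
  have hx₀L : x 0 ≤ L := le_ciSup hbdd 0
  have hfix : (1 - L * L) * (L + φ * B) - (L - L) * (B + φ * L) = 0 :=
    eq_of_tendsto_of_forall_succ_eq
      (f := fun a b => (1 - a * b) * (b + φ * B) - (b - a) * (B + φ * b)) (by fun_prop) hL fun i => by rw [(hbal i).sub_mul_eq, sub_self]
  have hpos : 0 < (1 + L) * (L + φ * B) := mul_pos (by linarith [(hmem 0).1]) (by linarith)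
  have hfactor : (1 - L) * ((1 + L) * (L + φ * B)) = 0 := by linear_combination hfix
  have hL₁ : L = 1 := by linarith [(mul_eq_zero.mp hfactor).resolve_right hpos.ne']
  exact hL₁ ▸ hL

end

/-- For B > 1, |φ| < 1/B, Φ = (1+φ)/(1−φ) and ξ = −φB, let
(x_i) ⊂ (−1,1) satisfy the stationary balance relation at every step. If
x₀ ∈ (ξ,1) then (x_i) strictly increases to 1; if x₀ ∈ (−1,ξ) then (x_i)
strictly decreases to −1. -/
theorem stationary_sequence_convergence (B φ : ℝ) (hB : 1 < B) (hφ : |φ| < 1 / B)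
    (Φ ξ : ℝ) (hΦ : Φ = (1 + φ) / (1 - φ)) (hξ : ξ = -φ * B)
    (x : ℕ → ℝ) (hmem : ∀ i, x i ∈ Set.Ioo (-1 : ℝ) 1)
    (hbal : ∀ i, Φ * (B + x (i + 1)) * (1 + x i) * (1 - x (i + 1)) =
      (B - x (i + 1)) * (1 - x i) * (1 + x (i + 1))) :
    (x 0 ∈ Set.Ioo ξ 1 → StrictMono x ∧ Tendsto x atTop (nhds 1)) ∧
    (x 0 ∈ Set.Ioo (-1 : ℝ) ξ → StrictAnti x ∧ Tendsto x atTop (nhds (-1))) := by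
  subst hΦ hξ
  have hφ₁ : |φ| < 1 := hφ.trans ((div_lt_one (by linarith)).mpr hB)
  have hstat i : StationaryBalance B φ (x i) (x (i + 1)) :=
    .of_eq (abs_lt.mp hφ₁).2.ne (hbal i)
  constructor
  · rintro ⟨h₀, -⟩
    have hmono := strictMono_of_stationaryBalance hB hφ₁ hmem hstat h₀
    exact ⟨hmono, tendsto_one_of_stationaryBalance hmono.monotone hmem hstat h₀⟩
  · rintro ⟨-, h₀⟩
    have hnegφ : |-φ| < 1 := by rwa [abs_neg]
    have hnegmem i : -x i ∈ Set.Ioo (-1 : ℝ) 1 := by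
      obtain ⟨h₁, h₂⟩ := hmem i
      constructor <;> linarith
    have hnegstat i : StationaryBalance B (-φ) (-x i) (-x (i + 1)) := (hstat i).neg
    have hneg₀ : -(-φ) * B < -x 0 := by linarith
    have hmono := strictMono_of_stationaryBalance hB hnegφ hnegmem hnegstat hneg₀
    refine ⟨fun a b hab => neg_lt_neg_iff.mp (hmono hab), ?_⟩
    simpa using (tendsto_one_of_stationaryBalance hmono.monotone hnegmem hnegstat hneg₀).neg
end

section
/- Let B > 1 and φ ∈ (−1, 1), and define g(x) = (1/(2(φ+x)))·(−(B−1)(1+φx) + √((B−1)²(1+φx)² + 4B(φ+x)²)) for x ≠ −φ. Then g is differentiable at x = 1 with g'(1) = ((1−φ)/(1+φ))·(B−1)/(B+1), and differentiable at x = −1 with g'(−1) = ((1+φ)/(1−φ))·(B−1)/(B+1). -/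
/-!
At the fixed point `z = 1` the radicand is the perfect square `((1 + φ) (B + 1))²`, so the square
root is differentiable there and the quotient rule gives `g'(1)` directly. The point `z = -1` is
reduced to `z = 1` by the symmetry `g_φ(-z) = -g_{-φ}(z)`, which exchanges `1 + φ` and `1 - φ`.
-/

def iterationRadicand (B φ z : ℝ) : ℝ := (B - 1) ^ 2 * (1 + φ * z) ^ 2 + 4 * B * (φ + z) ^ 2

noncomputable def iterationMap (B φ z : ℝ) : ℝ :=
  1 / (2 * (φ + z)) * (-(B - 1) * (1 + φ * z) + √(iterationRadicand B φ z))

lemma iterationRadicand_neg (B φ z : ℝ) :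
    iterationRadicand B φ (-z) = iterationRadicand B (-φ) z := by
  unfold iterationRadicand; ring

lemma iterationMap_neg (B φ z : ℝ) : iterationMap B φ (-z) = -iterationMap B (-φ) z := by
  unfold iterationMap
  rw [iterationRadicand_neg, show 2 * (φ + -z) = -(2 * (-φ + z)) by ring, div_neg]
  ring

lemma iterationRadicand_one (B φ : ℝ) : iterationRadicand B φ 1 = ((1 + φ) * (B + 1)) ^ 2 := by
  unfold iterationRadicand; ring

lemma hasDerivAt_iterationRadicand (B φ x : ℝ) :
    HasDerivAt (iterationRadicand B φ)
      (2 * (B - 1) ^ 2 * φ * (1 + φ * x) + 8 * B * (φ + x)) x := by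
  have h1 : HasDerivAt (fun z => 1 + φ * z) φ x := by
    simpa using ((hasDerivAt_id x).const_mul φ).const_add 1
  have h2 : HasDerivAt (fun z => φ + z) 1 x := (hasDerivAt_id x).const_add φ
  exact (((h1.fun_pow 2).const_mul ((B - 1) ^ 2)).add
    ((h2.fun_pow 2).const_mul (4 * B))).congr_deriv (by push_cast; ring)

theorem hasDerivAt_iterationMap_one {B φ : ℝ} (hB : -1 < B) (hφ : -1 < φ) :
    HasDerivAt (iterationMap B φ) ((1 - φ) / (1 + φ) * ((B - 1) / (B + 1))) 1 := by
  have hφ' : 0 < 1 + φ := by linarith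
  have hB' : 0 < B + 1 := by linarith
  have hs : √(iterationRadicand B φ 1) = (1 + φ) * (B + 1) := by
    rw [iterationRadicand_one, Real.sqrt_sq (by positivity)]
  have hden : HasDerivAt (fun z => 1 / (2 * (φ + z))) (-2 / (2 * (1 + φ)) ^ 2) 1 := by
    have hlin : HasDerivAt (fun z => 2 * (φ + z)) 2 1 := by
      simpa using ((hasDerivAt_id (1 : ℝ)).const_add φ).const_mul 2
    have := (hasDerivAt_const (1 : ℝ) (1 : ℝ)).div hlin (by linarith)
    rwa [add_comm φ 1, zero_mul, one_mul, zero_sub] at this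
  have hnum : HasDerivAt (fun z => -(B - 1) * (1 + φ * z) + √(iterationRadicand B φ z))
      (-(B - 1) * φ + (2 * (B - 1) ^ 2 * φ * (1 + φ) + 8 * B * (φ + 1)) /
        (2 * ((1 + φ) * (B + 1)))) 1 := by
    have hlin : HasDerivAt (fun z => -(B - 1) * (1 + φ * z)) (-(B - 1) * φ) 1 := by
      simpa using (((hasDerivAt_id (1 : ℝ)).const_mul φ).const_add 1).const_mul (-(B - 1))
    have hsqrt :=
      (hasDerivAt_iterationRadicand B φ 1).sqrt (by rw [iterationRadicand_one]; positivity)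
    rw [hs, mul_one] at hsqrt
    exact hlin.add hsqrt
  refine (hden.mul hnum).congr_deriv ?_
  rw [hs, add_comm φ 1]
  field_simp
  ring

theorem hasDerivAt_iterationMap_neg_one {B φ : ℝ} (hB : -1 < B) (hφ : φ < 1) :
    HasDerivAt (iterationMap B φ) ((1 + φ) / (1 - φ) * ((B - 1) / (B + 1))) (-1) := by
  have h := (hasDerivAt_iterationMap_one hB (neg_lt_neg hφ)).comp_of_eq (-1)
    (hasDerivAt_neg (-1 : ℝ)) (neg_neg (1 : ℝ)).symm
  have hsymm : iterationMap B φ = fun z => -iterationMap B (-φ) (-z) :=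
    funext fun z => by rw [← iterationMap_neg, neg_neg]
  rw [hsymm]
  exact h.neg.congr_deriv (by ring)

/-- The spatial iteration map g is differentiable at the fixed
points ±1, with g'(1) = ((1−φ)/(1+φ))·(B−1)/(B+1) and
g'(−1) = ((1+φ)/(1−φ))·(B−1)/(B+1). -/
theorem iteration_map_deriv_at_fixed_points (B φ : ℝ) (hB : 1 < B)
    (hφ : φ ∈ Set.Ioo (-1 : ℝ) 1)
    (g : ℝ → ℝ)
    (hg : ∀ z : ℝ, g z = (1 / (2 * (φ + z))) *
      (-(B - 1) * (1 + φ * z) +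
        Real.sqrt ((B - 1) ^ 2 * (1 + φ * z) ^ 2 + 4 * B * (φ + z) ^ 2))) :
    HasDerivAt g ((1 - φ) / (1 + φ) * ((B - 1) / (B + 1))) 1 ∧
    HasDerivAt g ((1 + φ) / (1 - φ) * ((B - 1) / (B + 1))) (-1) := by
  obtain ⟨hφ₁, hφ₂⟩ := hφ
  have hB' : -1 < B := by linarith
  obtain rfl : g = iterationMap B φ := funext hg
  exact ⟨hasDerivAt_iterationMap_one hB' hφ₁, hasDerivAt_iterationMap_neg_one hB' hφ₂⟩
end

section
/- Let B > 0 and x₀ ∈ (0, 1), and define x(t) = x₀·e^{t/B} / √(1 − x₀² + x₀²·e^{2t/B}) for t ∈ ℝ. Then x(0) = x₀, x(t) ∈ (0, 1) for all t, and for every t the function x is differentiable at t with x'(t) = x(t)(1 − x(t)²)/B. That is, x solves the continuous spatial limit equation dx/di = x(1−x²)/B of the unbiased stationary iteration. -/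
/-!
Write `y(t) = x₀ e^{t/B}` and `c = 1 − x₀²`, so that `x = y / √(c + y²)` and `y' = y / B`.
The normalisation `g(y) = y / √(c + y²)` satisfies `1 − g² = c / (c + y²)` and
`dg/dy = c / (c + y²)^{3/2}`, hence `dx/dt = (y / B) · g'(y) = x (1 − x²) / B`. Since `c > 0` and
`y > 0`, `x` stays in `(0, 1)`.
-/

open Real Set

theorem one_sub_sq_div_sqrt_add_sq {c y : ℝ} (h : 0 < c + y ^ 2) :
    1 - (y / √(c + y ^ 2)) ^ 2 = c / (c + y ^ 2) := by
  rw [div_pow, sq_sqrt h.le]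
  field_simp
  ring

theorem div_sqrt_add_sq_mem_Ioo {c y : ℝ} (hc : 0 < c) (hy : 0 < y) :
    y / √(c + y ^ 2) ∈ Ioo 0 1 := by
  have h : 0 < c + y ^ 2 := by positivity
  refine ⟨by positivity, ?_⟩
  rw [div_lt_one (sqrt_pos.2 h), lt_sqrt hy.le]
  linarith

theorem HasDerivAt.div_sqrt_add_sq {y : ℝ → ℝ} {y' c t : ℝ} (hy : HasDerivAt y y' t)
    (h : 0 < c + y t ^ 2) :
    HasDerivAt (fun u => y u / √(c + y u ^ 2))
      (y' * (c / (c + y t ^ 2)) / √(c + y t ^ 2)) t := by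
  have hs := ((hy.fun_pow 2).const_add c).sqrt h.ne'
  refine (hy.fun_div hs (sqrt_pos.2 h).ne').congr_deriv ?_
  have hs2 := sq_sqrt h.le
  field_simp
  rw [hs2]
  ring

theorem HasDerivAt.div_sqrt_add_sq_of_hasDerivAt_self_div {y : ℝ → ℝ} {B c t : ℝ}
    (hy : HasDerivAt y (y t / B) t) (h : 0 < c + y t ^ 2) :
    HasDerivAt (fun u => y u / √(c + y u ^ 2))
      (y t / √(c + y t ^ 2) * (1 - (y t / √(c + y t ^ 2)) ^ 2) / B) t := by
  convert hy.div_sqrt_add_sq h using 1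
  rw [one_sub_sq_div_sqrt_add_sq h]
  ring

theorem continuous_limit_solution_general (B x₀ : ℝ)
    (hx₀ : x₀ ∈ Set.Ioo (0 : ℝ) 1)
    (x : ℝ → ℝ)
    (hx : ∀ t : ℝ, x t = x₀ * Real.exp (t / B) /
      Real.sqrt (1 - x₀ ^ 2 + x₀ ^ 2 * Real.exp (2 * t / B))) :
    x 0 = x₀ ∧
    (∀ t : ℝ, x t ∈ Set.Ioo (0 : ℝ) 1) ∧
    (∀ t : ℝ, HasDerivAt x (x t * (1 - (x t) ^ 2) / B) t) := by
  obtain ⟨y, hy_def⟩ : ∃ y : ℝ → ℝ, y = fun t => x₀ * exp (t / B) := ⟨_, rfl⟩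
  have hxy : x = fun t => y t / √(1 - x₀ ^ 2 + y t ^ 2) := by
    funext t
    rw [hx, hy_def, mul_pow, ← exp_nat_mul]
    push_cast
    ring_nf
  have hc : 0 < 1 - x₀ ^ 2 := by nlinarith [hx₀.1, hx₀.2]
  have hy_pos : ∀ t, 0 < y t := fun t => by
    rw [hy_def]
    exact mul_pos hx₀.1 (exp_pos _)
  have hy_deriv : ∀ t, HasDerivAt y (y t / B) t := fun t => by
    rw [hy_def]
    refine (((hasDerivAt_id t).div_const B).exp.const_mul x₀).congr_deriv ?_
    simp only [id]
    ring
  subst hxy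
  refine ⟨by simp [hy_def], fun t => div_sqrt_add_sq_mem_Ioo hc (hy_pos t), fun t => ?_⟩
  exact (hy_deriv t).div_sqrt_add_sq_of_hasDerivAt_self_div
    (add_pos_of_pos_of_nonneg hc (sq_nonneg _))

/-- For B > 0, x₀ ∈ (0,1) and
x(t) = x₀e^{t/B}/√(1 − x₀² + x₀²e^{2t/B}), we have x(0) = x₀, x(t) ∈ (0,1)
for all t, and x solves x'(t) = x(t)(1 − x(t)²)/B. -/
theorem continuous_limit_solution (B x₀ : ℝ) (hB : 0 < B)
    (hx₀ : x₀ ∈ Set.Ioo (0 : ℝ) 1)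
    (x : ℝ → ℝ)
    (hx : ∀ t : ℝ, x t = x₀ * Real.exp (t / B) /
      Real.sqrt (1 - x₀ ^ 2 + x₀ ^ 2 * Real.exp (2 * t / B))) :
    x 0 = x₀ ∧
    (∀ t : ℝ, x t ∈ Set.Ioo (0 : ℝ) 1) ∧
    (∀ t : ℝ, HasDerivAt x (x t * (1 - (x t) ^ 2) / B) t) :=
  continuous_limit_solution_general B x₀ hx₀ x hx
end
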